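/- arXiv:1101.2478 — 4 statements merged into one kernel-verified Lean document; each statement's English description precedes it below -/
import Mathlib

section
/- Let (Ω, ℱ, ℙ) be a probability space, and let d > 0 and c > 0 be constants. For each k ∈ ℕ let S_k ≥ 0 and A_k ≥ 0 be integrable real random variables with E[A_k] ≥ c for every k. Let Z_0 = 0 and define recursively Z_{k+1} = max(Z_k + S_k − d·A_k, 0) almost surely. If the sequence (Z_K)_{K∈ℕ} is mean rate stable, then limsup_{K→∞} E[Σ_{k=0}^{K−1} S_k] / E[Σ_{k=0}^{K−1} A_k] ≤ d. -/
/-!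
Since `max x 0 ≥ x`, taking expectations in the recursion gives the drift inequality
`E Z_{k+1} ≥ E Z_k + E S_k - d E A_k`, which telescopes to
`E[∑_{k<K} S_k] ≤ E Z_K + d E[∑_{k<K} A_k]`. Dividing by `E[∑_{k<K} A_k] ≥ c K` bounds the ratio
by `d + E Z_K / (c K)`, and the error term tends to `0` by mean rate stability.
-/

open MeasureTheory Filter Topology

theorem sum_le_sub_add_mul_sum_of_drift {s a z : ℕ → ℝ} {d : ℝ}
    (hdrift : ∀ k, z k + s k - d * a k ≤ z (k + 1)) (K : ℕ) :
    ∑ k ∈ Finset.range K, s k ≤ z K - z 0 + d * ∑ k ∈ Finset.range K, a k := by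
  have hsum : ∑ k ∈ Finset.range K, (s k - d * a k) ≤ ∑ k ∈ Finset.range K, (z (k + 1) - z k) :=
    Finset.sum_le_sum fun k _ => by linarith [hdrift k]
  rwa [Finset.sum_range_sub, Finset.sum_sub_distrib, ← Finset.mul_sum, sub_le_iff_le_add] at hsum

theorem limsup_div_le_of_le_add_mul {f g z : ℕ → ℝ} {c d : ℝ} (hc : 0 < c)
    (hf : ∀ K, 0 ≤ f K) (hg : ∀ K : ℕ, c * K ≤ g K) (hz : ∀ K, 0 ≤ z K)
    (hfg : ∀ K, f K ≤ z K + d * g K) (hz_lim : Tendsto (fun K : ℕ => z K / K) atTop (𝓝 0)) :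
    limsup (fun K => f K / g K) atTop ≤ d := by
  have hbound_lim : Tendsto (fun K : ℕ => z K / (c * K) + d) atTop (𝓝 d) := by
    simpa only [zero_div, zero_add, div_div, mul_comm _ c] using
      (hz_lim.div_const c).add_const d
  have hbound : ∀ᶠ K : ℕ in atTop, f K / g K ≤ z K / (c * K) + d := by
    filter_upwards [eventually_ge_atTop 1] with K hK
    have hcK : 0 < c * K := mul_pos hc (by exact_mod_cast hK)
    have hgK : 0 < g K := hcK.trans_le (hg K)
    rw [div_le_iff₀ hgK]
    calc f K ≤ z K + d * g K := hfg K
      _ ≤ z K / (c * K) * g K + d * g K := by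
          gcongr
          rw [div_mul_eq_mul_div, le_div_iff₀ hcK]
          exact mul_le_mul_of_nonneg_left (hg K) (hz K)
      _ = (z K / (c * K) + d) * g K := by ring
  have hratio_nonneg : ∀ᶠ K : ℕ in atTop, 0 ≤ f K / g K := by
    filter_upwards [eventually_ge_atTop 1] with K hK
    exact div_nonneg (hf K) ((mul_nonneg hc.le K.cast_nonneg).trans (hg K))
  calc limsup (fun K => f K / g K) atTop ≤ limsup (fun K : ℕ => z K / (c * K) + d) atTop :=
        limsup_le_limsup hbound (isCoboundedUnder_le_of_eventually_le atTop hratio_nonneg)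
          hbound_lim.isBoundedUnder_le
    _ = d := hbound_lim.limsup_eq

section VirtualQueue

variable {Ω : Type*} [MeasurableSpace Ω] {μ : Measure Ω} {d : ℝ} {S A Z : ℕ → Ω → ℝ}

theorem integral_add_sub_le_integral_of_le_max {k : ℕ}
    (hS : Integrable (S k) μ) (hA : Integrable (A k) μ) (hZk : Integrable (Z k) μ)
    (hZsucc : Integrable (Z (k + 1)) μ)
    (hrec : ∀ᵐ ω ∂μ, Z (k + 1) ω = max (Z k ω + S k ω - d * A k ω) 0) :
    ∫ ω, Z k ω ∂μ + ∫ ω, S k ω ∂μ - d * ∫ ω, A k ω ∂μ ≤ ∫ ω, Z (k + 1) ω ∂μ := by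
  have hZS : Integrable (fun ω => Z k ω + S k ω) μ := hZk.add hS
  calc ∫ ω, Z k ω ∂μ + ∫ ω, S k ω ∂μ - d * ∫ ω, A k ω ∂μ
        = ∫ ω, (Z k ω + S k ω - d * A k ω) ∂μ := by
          rw [integral_sub hZS (hA.const_mul d), integral_add hZk hS, integral_const_mul]
    _ ≤ ∫ ω, Z (k + 1) ω ∂μ :=
        integral_mono_ae (hZS.sub (hA.const_mul d)) hZsucc
          (hrec.mono fun _ hω => hω ▸ le_max_left _ _)

theorem integral_nonneg_of_eq_max {k : ℕ}
    (hrec : ∀ᵐ ω ∂μ, Z (k + 1) ω = max (Z k ω + S k ω - d * A k ω) 0) :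
    0 ≤ ∫ ω, Z (k + 1) ω ∂μ :=
  integral_nonneg_of_ae (hrec.mono fun _ hω => hω ▸ le_max_right _ _)

end VirtualQueue

theorem stmt0_general
    {Ω : Type*} [MeasurableSpace Ω] (ℙ : Measure Ω)
    (d c : ℝ) (hc : 0 < c)
    (S A Z : ℕ → Ω → ℝ)
    (hS_int : ∀ k, Integrable (S k) ℙ) (hA_int : ∀ k, Integrable (A k) ℙ)
    (hZ_int : ∀ k, Integrable (Z k) ℙ)
    (hS_nonneg : ∀ k, 0 ≤ᵐ[ℙ] S k)
    (hA_mean : ∀ k, c ≤ ∫ ω, A k ω ∂ℙ)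
    (hZ0 : ∀ᵐ ω ∂ℙ, Z 0 ω = 0)
    (hZrec : ∀ k, ∀ᵐ ω ∂ℙ, Z (k + 1) ω = max (Z k ω + S k ω - d * A k ω) 0)
    (hmrs : Tendsto (fun K : ℕ => (∫ ω, Z K ω ∂ℙ) / K) atTop (nhds 0)) :
    Filter.limsup (fun K : ℕ =>
      (∫ ω, ∑ k ∈ Finset.range K, S k ω ∂ℙ) /
      (∫ ω, ∑ k ∈ Finset.range K, A k ω ∂ℙ)) atTop ≤ d := by
  have hEZ0 : ∫ ω, Z 0 ω ∂ℙ = 0 := by simp [integral_congr_ae hZ0]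
  simp only [integral_finsetSum _ fun k _ => hS_int k, integral_finsetSum _ fun k _ => hA_int k]
  refine limsup_div_le_of_le_add_mul hc
    (fun K => Finset.sum_nonneg fun k _ => integral_nonneg_of_ae (hS_nonneg k))
    (fun K => ?_) (fun K => ?_) (fun K => ?_) hmrs
  · simpa [mul_comm c] using Finset.card_nsmul_le_sum (Finset.range K) _ c fun k _ => hA_mean k
  · cases K with
    | zero => exact hEZ0.ge
    | succ k => exact integral_nonneg_of_eq_max (hZrec k)
  · simpa [hEZ0] using sum_le_sub_add_mul_sum_of_drift (fun k =>
      integral_add_sub_le_integral_of_le_max (hS_int k) (hA_int k) (hZ_int k) (hZ_int (k + 1))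
        (hZrec k)) K

/-- Virtual delay queue lemma: if the virtual queue `Z` driven by delays `S`,
arrival counts `A` and bound `d` is mean rate stable, then the time-average
delay ratio is at most `d`. -/
theorem stmt0
    {Ω : Type*} [MeasurableSpace Ω] (ℙ : Measure Ω) [IsProbabilityMeasure ℙ]
    (d c : ℝ) (hd : 0 < d) (hc : 0 < c)
    (S A Z : ℕ → Ω → ℝ)
    (hS_int : ∀ k, Integrable (S k) ℙ) (hA_int : ∀ k, Integrable (A k) ℙ)
    (hZ_int : ∀ k, Integrable (Z k) ℙ)
    (hS_nonneg : ∀ k, 0 ≤ᵐ[ℙ] S k) (hA_nonneg : ∀ k, 0 ≤ᵐ[ℙ] A k)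
    (hA_mean : ∀ k, c ≤ ∫ ω, A k ω ∂ℙ)
    (hZ0 : ∀ᵐ ω ∂ℙ, Z 0 ω = 0)
    (hZrec : ∀ k, ∀ᵐ ω ∂ℙ, Z (k + 1) ω = max (Z k ω + S k ω - d * A k ω) 0)
    (hmrs : Tendsto (fun K : ℕ => (∫ ω, Z K ω ∂ℙ) / K) atTop (nhds 0)) :
    Filter.limsup (fun K : ℕ =>
      (∫ ω, ∑ k ∈ Finset.range K, S k ω ∂ℙ) /
      (∫ ω, ∑ k ∈ Finset.range K, A k ω ∂ℙ)) atTop ≤ d :=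
  stmt0_general ℙ d c hc S A Z hS_int hA_int hZ_int hS_nonneg hA_mean hZ0 hZrec hmrs
end

section
/- Let (Ω, ℱ, ℙ) be a probability space, and let P_const > 0 and c > 0 be constants. For each k ∈ ℕ let E_k ≥ 0 (energy consumed in frame k) and T_k ≥ 0 (frame size) be integrable real random variables with E[T_k] ≥ c for every k. Let X_0 = 0 and define recursively X_{k+1} = max(X_k + E_k − P_const·T_k, 0) almost surely. If the sequence (X_K)_{K∈ℕ} is mean rate stable, then limsup_{K→∞} E[Σ_{k=0}^{K−1} E_k] / E[Σ_{k=0}^{K−1} T_k] ≤ P_const. -/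
/-!
Unrolling `X (k + 1) = max (X k + E k - P T k) 0` gives the pathwise bound
`∑_{k<K} (E k - P T k) ≤ X K`. Taking expectations and dividing by
`E[∑_{k<K} T k] ≥ c K` bounds the time-average power by `P + E[X K] / (c K)`,
and the error term vanishes by mean rate stability.
-/

open MeasureTheory Filter Topology Finset

section MaxRecursion

variable {Ω : Type*} [MeasurableSpace Ω] {μ : Measure Ω} {a X : ℕ → Ω → ℝ}

lemma ae_sum_le_and_nonneg_of_max_recursion (hX0 : ∀ᵐ ω ∂μ, X 0 ω = 0)
    (hXrec : ∀ k, ∀ᵐ ω ∂μ, X (k + 1) ω = max (X k ω + a k ω) 0) (K : ℕ) :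
    ∀ᵐ ω ∂μ, ∑ k ∈ range K, a k ω ≤ X K ω ∧ 0 ≤ X K ω := by
  induction K with
  | zero => filter_upwards [hX0] with ω h0 using by simp [h0]
  | succ K ih =>
    filter_upwards [ih, hXrec K] with ω ⟨hsum, _⟩ hrec
    rw [hrec, sum_range_succ]
    exact ⟨le_max_of_le_left (by linarith), le_max_right _ _⟩

lemma sum_integral_le_integral_of_max_recursion (hX0 : ∀ᵐ ω ∂μ, X 0 ω = 0)
    (hXrec : ∀ k, ∀ᵐ ω ∂μ, X (k + 1) ω = max (X k ω + a k ω) 0)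
    (ha : ∀ k, Integrable (a k) μ) {K : ℕ} (hX : Integrable (X K) μ) :
    ∑ k ∈ range K, ∫ ω, a k ω ∂μ ≤ ∫ ω, X K ω ∂μ := by
  rw [← integral_finsetSum _ fun k _ => ha k]
  refine integral_mono_ae (integrable_finsetSum _ fun k _ => ha k) hX ?_
  filter_upwards [ae_sum_le_and_nonneg_of_max_recursion hX0 hXrec K] with ω h using h.1

lemma integral_nonneg_of_max_recursion (hX0 : ∀ᵐ ω ∂μ, X 0 ω = 0)
    (hXrec : ∀ k, ∀ᵐ ω ∂μ, X (k + 1) ω = max (X k ω + a k ω) 0) (K : ℕ) :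
    0 ≤ ∫ ω, X K ω ∂μ :=
  integral_nonneg_of_ae <| by
    filter_upwards [ae_sum_le_and_nonneg_of_max_recursion hX0 hXrec K] with ω h using h.2

end MaxRecursion

lemma div_le_add_div_of_le_add_mul {N I P D d : ℝ} (hN : N ≤ I + P * D) (hI : 0 ≤ I)
    (hd : 0 < d) (hdD : d ≤ D) : N / D ≤ P + I / d := by
  have hD : 0 < D := hd.trans_le hdD
  calc N / D ≤ (I + P * D) / D := by gcongr
    _ = P + I / D := by field_simp; ring
    _ ≤ P + I / d := by gcongr

lemma limsup_le_of_eventually_le_of_tendsto {α : Type*} {l : Filter α} [l.NeBot]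
    {f g : α → ℝ} {b L : ℝ} (hb : ∀ᶠ x in l, b ≤ f x) (hfg : f ≤ᶠ[l] g)
    (hg : Tendsto g l (𝓝 L)) : limsup f l ≤ L :=
  hg.limsup_eq ▸ limsup_le_limsup hfg (isCoboundedUnder_le_of_eventually_le l hb)
    hg.isBoundedUnder_le

theorem stmt1_general
    {Ω : Type*} [MeasurableSpace Ω] (ℙ : Measure Ω) [IsProbabilityMeasure ℙ]
    (Pconst c : ℝ) (hc : 0 < c)
    (E T X : ℕ → Ω → ℝ)
    (hE_int : ∀ k, Integrable (E k) ℙ) (hT_int : ∀ k, Integrable (T k) ℙ)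
    (hX_int : ∀ k, Integrable (X k) ℙ)
    (hE_nonneg : ∀ k, 0 ≤ᵐ[ℙ] E k)
    (hT_mean : ∀ k, c ≤ ∫ ω, T k ω ∂ℙ)
    (hX0 : ∀ᵐ ω ∂ℙ, X 0 ω = 0)
    (hXrec : ∀ k, ∀ᵐ ω ∂ℙ, X (k + 1) ω = max (X k ω + E k ω - Pconst * T k ω) 0)
    (hmrs : Tendsto (fun K : ℕ => (∫ ω, X K ω ∂ℙ) / K) atTop (nhds 0)) :
    Filter.limsup (fun K : ℕ =>
      (∫ ω, ∑ k ∈ Finset.range K, E k ω ∂ℙ) /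
      (∫ ω, ∑ k ∈ Finset.range K, T k ω ∂ℙ)) atTop ≤ Pconst := by
  have hXrec' : ∀ k, ∀ᵐ ω ∂ℙ,
      X (k + 1) ω = max (X k ω + (E k ω - Pconst * T k ω)) 0 := fun k => by
    simpa only [add_sub_assoc] using hXrec k
  have hintegral : ∀ K, (∫ ω, ∑ k ∈ range K, E k ω ∂ℙ)
      ≤ ∫ ω, X K ω ∂ℙ + Pconst * ∫ ω, ∑ k ∈ range K, T k ω ∂ℙ := fun K => by
    have := sum_integral_le_integral_of_max_recursion hX0 hXrec'
      (fun k => (hE_int k).sub ((hT_int k).const_mul Pconst)) (hX_int K)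
    simp only [integral_sub (hE_int _) ((hT_int _).const_mul Pconst), integral_const_mul,
      sum_sub_distrib, ← mul_sum] at this
    rw [integral_finsetSum _ fun k _ => hE_int k, integral_finsetSum _ fun k _ => hT_int k]
    linarith
  have hmean : ∀ K : ℕ, c * K ≤ ∫ ω, ∑ k ∈ range K, T k ω ∂ℙ := fun K => by
    rw [integral_finsetSum _ fun k _ => hT_int k, mul_comm]
    simpa using card_nsmul_le_sum (range K) _ c fun k _ => hT_mean k
  refine limsup_le_of_eventually_le_of_tendsto (b := 0) (g := fun K : ℕ =>
    Pconst + (∫ ω, X K ω ∂ℙ) / (c * K)) ?_ ?_ ?_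
  · refine Eventually.of_forall fun K => div_nonneg (integral_nonneg_of_ae ?_)
      ((mul_nonneg hc.le K.cast_nonneg).trans (hmean K))
    filter_upwards [ae_all_iff.2 hE_nonneg] with ω h using sum_nonneg fun k _ => h k
  · filter_upwards [eventually_ge_atTop 1] with K hK
    exact div_le_add_div_of_le_add_mul (hintegral K) (integral_nonneg_of_max_recursion hX0 hXrec' K)
      (by positivity) (hmean K)
  · simpa [mul_comm c, ← div_div] using tendsto_const_nhds.add (hmrs.div_const c)

/-- Virtual power queue lemma: if the virtual power queue `X` driven by
per-frame energies `E` and frame sizes `T` with power bound `Pconst` is mean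
rate stable, then the time-average power is at most `Pconst`. -/
theorem stmt1
    {Ω : Type*} [MeasurableSpace Ω] (ℙ : Measure Ω) [IsProbabilityMeasure ℙ]
    (Pconst c : ℝ) (hP : 0 < Pconst) (hc : 0 < c)
    (E T X : ℕ → Ω → ℝ)
    (hE_int : ∀ k, Integrable (E k) ℙ) (hT_int : ∀ k, Integrable (T k) ℙ)
    (hX_int : ∀ k, Integrable (X k) ℙ)
    (hE_nonneg : ∀ k, 0 ≤ᵐ[ℙ] E k) (hT_nonneg : ∀ k, 0 ≤ᵐ[ℙ] T k)
    (hT_mean : ∀ k, c ≤ ∫ ω, T k ω ∂ℙ)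
    (hX0 : ∀ᵐ ω ∂ℙ, X 0 ω = 0)
    (hXrec : ∀ k, ∀ᵐ ω ∂ℙ, X (k + 1) ω = max (X k ω + E k ω - Pconst * T k ω) 0)
    (hmrs : Tendsto (fun K : ℕ => (∫ ω, X K ω ∂ℙ) / K) atTop (nhds 0)) :
    Filter.limsup (fun K : ℕ =>
      (∫ ω, ∑ k ∈ Finset.range K, E k ω ∂ℙ) /
      (∫ ω, ∑ k ∈ Finset.range K, T k ω ∂ℙ)) atTop ≤ Pconst :=
  stmt1_general ℙ Pconst c hc E T X hE_int hT_int hX_int hE_nonneg hT_mean hX0 hXrec hmrs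
end

section
/- Let (Ω, ℱ, ℙ) be a probability space, f : ℝ → ℝ a convex function, and K ∈ ℕ with K ≥ 1. For each k ∈ Fin K let r_k be an integrable real random variable and T_k a nonnegative integrable real random variable such that r_k and T_k are independent and f(r_k)·T_k and r_k·T_k are integrable. If Σ_{k} E[T_k] > 0, then Σ_{k} E[f(r_k)·T_k] / Σ_{k} E[T_k] ≥ f( Σ_{k} E[r_k·T_k] / Σ_{k} E[T_k] ). -/
open MeasureTheory

/-! Jensen's inequality applied twice. Inside frame `k`, independence factorises
`E[f(r_k) T_k] = E[f(r_k)] E[T_k] ≥ f(E[r_k]) E[T_k]` and likewise `E[r_k T_k] = E[r_k] E[T_k]`;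
the finite Jensen inequality for the weights `E[T_k]` then gives the claim. -/

theorem ConvexOn.map_sum_mul_div_le {ι : Type*} {s : Set ℝ} {f : ℝ → ℝ} (hf : ConvexOn ℝ s f)
    (t : Finset ι) {a w : ι → ℝ} (hw : ∀ i ∈ t, 0 ≤ w i) (hpos : 0 < ∑ i ∈ t, w i)
    (ha : ∀ i ∈ t, a i ∈ s) :
    f ((∑ i ∈ t, a i * w i) / ∑ i ∈ t, w i) ≤ (∑ i ∈ t, f (a i) * w i) / ∑ i ∈ t, w i := by
  have h := hf.map_centerMass_le hw hpos ha
  simp only [Finset.centerMass, smul_eq_mul, Function.comp_apply] at h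
  simpa only [div_eq_inv_mul, mul_comm (w _)] using h

section IndepWeight

open ProbabilityTheory

variable {Ω : Type*} [MeasurableSpace Ω] {μ : Measure Ω}
  {f : ℝ → ℝ} {X Y : Ω → ℝ}

theorem ProbabilityTheory.IndepFun.integrable_comp_of_integrable_comp_mul (hf : Continuous f)
    (hXY : IndepFun X Y μ) (hX : AEStronglyMeasurable X μ) (hY : AEStronglyMeasurable Y μ)
    (hY0 : ¬Y =ᵐ[μ] 0) (hfXY : Integrable (fun ω => f (X ω) * Y ω) μ) :
    Integrable (fun ω => f (X ω)) μ :=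
  (hXY.comp hf.measurable measurable_id).integrable_left_of_integrable_op (· * ·) 1 one_ne_zero
    (fun x y => by simp [enorm_mul]) hfXY (hf.comp_aestronglyMeasurable hX) hY hY0

theorem ConvexOn.map_integral_mul_integral_le_of_indepFun [IsProbabilityMeasure μ]
    (hf : ConvexOn ℝ Set.univ f)
    (hXY : IndepFun X Y μ) (hX : Integrable X μ) (hY : Integrable Y μ) (hY_nonneg : 0 ≤ᵐ[μ] Y)
    (hfXY : Integrable (fun ω => f (X ω) * Y ω) μ) :
    f (∫ ω, X ω ∂μ) * ∫ ω, Y ω ∂μ ≤ ∫ ω, f (X ω) * Y ω ∂μ := by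
  have hfc : Continuous f := continuousOn_univ.mp (hf.continuousOn isOpen_univ)
  by_cases hY0 : Y =ᵐ[μ] 0
  · have hfXY0 : (fun ω => f (X ω) * Y ω) =ᵐ[μ] 0 := by
      filter_upwards [hY0] with ω hω
      simp [hω]
    rw [integral_eq_zero_of_ae hY0, integral_eq_zero_of_ae hfXY0, mul_zero]
  have hfX : Integrable (fun ω => f (X ω)) μ :=
    hXY.integrable_comp_of_integrable_comp_mul hfc hX.1 hY.1 hY0 hfXY
  have jensen : f (∫ ω, X ω ∂μ) ≤ ∫ ω, f (X ω) ∂μ :=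
    hf.map_integral_le hfc.continuousOn isClosed_univ (.of_forall fun _ => trivial) hX hfX
  have hfXY_indep : IndepFun (fun ω => f (X ω)) Y μ := hXY.comp hfc.measurable measurable_id
  rw [hfXY_indep.integral_fun_mul_eq_mul_integral (hfc.comp_aestronglyMeasurable hX.1) hY.1]
  exact mul_le_mul_of_nonneg_right jensen (integral_nonneg_of_ae hY_nonneg)

end IndepWeight

theorem stmt6_general
    {Ω : Type*} [MeasurableSpace Ω] (ℙ : Measure Ω) [IsProbabilityMeasure ℙ]
    (f : ℝ → ℝ) (hf : ConvexOn ℝ Set.univ f)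
    (K : ℕ)
    (r T : Fin K → Ω → ℝ)
    (hrint : ∀ k, Integrable (r k) ℙ)
    (hTint : ∀ k, Integrable (T k) ℙ)
    (hTnn : ∀ k, 0 ≤ᵐ[ℙ] T k)
    (hindep : ∀ k, ProbabilityTheory.IndepFun (r k) (T k) ℙ)
    (hfrT : ∀ k, Integrable (fun ω => f (r k ω) * T k ω) ℙ)
    (hpos : 0 < ∑ k, ∫ ω, T k ω ∂ℙ) :
    f ((∑ k, ∫ ω, r k ω * T k ω ∂ℙ) / (∑ k, ∫ ω, T k ω ∂ℙ)) ≤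
      (∑ k, ∫ ω, f (r k ω) * T k ω ∂ℙ) / (∑ k, ∫ ω, T k ω ∂ℙ) := by
  have hrT : ∀ k, ∫ ω, r k ω * T k ω ∂ℙ = (∫ ω, r k ω ∂ℙ) * ∫ ω, T k ω ∂ℙ := fun k =>
    (hindep k).integral_fun_mul_eq_mul_integral (hrint k).1 (hTint k).1
  calc f ((∑ k, ∫ ω, r k ω * T k ω ∂ℙ) / ∑ k, ∫ ω, T k ω ∂ℙ)
      = f ((∑ k, (∫ ω, r k ω ∂ℙ) * ∫ ω, T k ω ∂ℙ) / ∑ k, ∫ ω, T k ω ∂ℙ) := by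
        simp only [hrT]
    _ ≤ (∑ k, f (∫ ω, r k ω ∂ℙ) * ∫ ω, T k ω ∂ℙ) / ∑ k, ∫ ω, T k ω ∂ℙ :=
        hf.map_sum_mul_div_le _ (fun k _ => integral_nonneg_of_ae (hTnn k)) hpos
          (fun _ _ => trivial)
    _ ≤ (∑ k, ∫ ω, f (r k ω) * T k ω ∂ℙ) / ∑ k, ∫ ω, T k ω ∂ℙ := by
        gcongr with k
        exact hf.map_integral_mul_integral_le_of_indepFun (hindep k) (hrint k) (hTint k)
          (hTnn k) (hfrT k)

/-- Frame-weighted Jensen inequality: for convex `f`, auxiliary variables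
`r k` independent of the nonnegative frame sizes `T k`, the weighted average
penalty dominates the penalty of the weighted average. -/
theorem stmt6
    {Ω : Type*} [MeasurableSpace Ω] (ℙ : Measure Ω) [IsProbabilityMeasure ℙ]
    (f : ℝ → ℝ) (hf : ConvexOn ℝ Set.univ f)
    (K : ℕ) (hK : 1 ≤ K)
    (r T : Fin K → Ω → ℝ)
    (hrint : ∀ k, Integrable (r k) ℙ)
    (hTint : ∀ k, Integrable (T k) ℙ)
    (hTnn : ∀ k, 0 ≤ᵐ[ℙ] T k)
    (hindep : ∀ k, ProbabilityTheory.IndepFun (r k) (T k) ℙ)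
    (hfrT : ∀ k, Integrable (fun ω => f (r k ω) * T k ω) ℙ)
    (hrT : ∀ k, Integrable (fun ω => r k ω * T k ω) ℙ)
    (hpos : 0 < ∑ k, ∫ ω, T k ω ∂ℙ) :
    f ((∑ k, ∫ ω, r k ω * T k ω ∂ℙ) / (∑ k, ∫ ω, T k ω ∂ℙ)) ≤
      (∑ k, ∫ ω, f (r k ω) * T k ω ∂ℙ) / (∑ k, ∫ ω, T k ω ∂ℙ) :=
  stmt6_general ℙ f hf K r T hrint hTint hTnn hindep hfrT hpos
end

section
/- Let N ∈ ℕ with N ≥ 1, and let b : Finset (Fin N) → ℝ satisfy b(∅) = 0 and be supermodular: b(S ∪ T) + b(S ∩ T) ≥ b(S) + b(T) for all S, T ⊆ Fin N. Define Ω := { x : Fin N → ℝ | for every S ⊆ Fin N, Σ_{i∈S} x_i ≥ b(S), and Σ_{i∈Fin N} x_i = b(Fin N) }. Let c : Fin N → ℝ be nonnegative and nonincreasing (c_m ≥ c_n whenever m ≤ n), and define x* : Fin N → ℝ by x*_n := b({0, 1, …, n}) − b({0, 1, …, n−1}). Then x* ∈ Ω and Σ_n c_n x*_n ≤ Σ_n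 c_n x_n for every x ∈ Ω. -/
/-!
Supermodularity applied to a set `S` with largest element `a` and to `Iio a` gives
`b S - b (S \ {a}) ≤ b (Iic a) - b (Iio a)`, so the greedy increments dominate `b` on every set,
with equality on the chain of initial segments, where the sums telescope. For optimality, with
`y = x - x*` all initial-segment sums of `y` are nonnegative and the total is zero; summation by
parts against the nonincreasing `c` gives `∑ c y ≥ t ∑ y = 0` for any lower bound `t` of `c`.
-/

open Finset

section Greedy

variable {α : Type*} [LinearOrder α] [LocallyFiniteOrderBot α]

def greedyVertex (b : Finset α → ℝ) (n : α) : ℝ := b (Iic n) - b (Iio n)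

theorem Finset.eq_Iio_of_isLowerSet_insert {a : α} {s : Finset α}
    (hs : IsLowerSet (↑(insert a s) : Set α)) (ha : ∀ x ∈ s, x < a) : s = Iio a := by
  ext x
  refine ⟨fun hx => mem_Iio.2 (ha x hx), fun hx => ?_⟩
  have hmem : x ∈ insert a s := hs (mem_Iio.1 hx).le (mem_insert_self a s)
  exact (mem_insert.1 hmem).resolve_left (mem_Iio.1 hx).ne

theorem sum_greedyVertex_of_isLowerSet {b : Finset α → ℝ} (hb0 : b ∅ = 0) (S : Finset α)
    (hS : IsLowerSet (S : Set α)) : ∑ i ∈ S, greedyVertex b i = b S := by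
  induction S using Finset.induction_on_max with
  | empty => simp [hb0]
  | insert a s ha ih =>
    obtain rfl := eq_Iio_of_isLowerSet_insert hS ha
    rw [sum_insert notMem_Iio_self, ih (coe_Iio a ▸ isLowerSet_Iio a), Iio_insert, greedyVertex]
    ring

theorem le_sum_greedyVertex {b : Finset α → ℝ} (hb0 : b ∅ = 0)
    (hsuper : ∀ S T : Finset α, b S + b T ≤ b (S ∪ T) + b (S ∩ T)) (S : Finset α) :
    b S ≤ ∑ i ∈ S, greedyVertex b i := by
  induction S using Finset.induction_on_max with
  | empty => simp [hb0]
  | insert a s ha ih =>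
    have hunion : insert a s ∪ Iio a = Iic a := by
      ext x
      simp only [mem_union, mem_insert, mem_Iio, mem_Iic]
      grind
    have hinter : insert a s ∩ Iio a = s := by
      ext x
      simp only [mem_inter, mem_insert, mem_Iio]
      grind
    have hsup := hsuper (insert a s) (Iio a)
    rw [hunion, hinter] at hsup
    rw [sum_insert fun h => lt_irrefl a (ha a h), greedyVertex]
    linarith

theorem mul_sum_le_sum_mul_of_antitone {c y : α → ℝ} (hc : Antitone c)
    (hy : ∀ S : Finset α, IsLowerSet (S : Set α) → 0 ≤ ∑ i ∈ S, y i) {S : Finset α}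
    (hS : IsLowerSet (S : Set α)) {t : ℝ} (ht : ∀ i ∈ S, t ≤ c i) :
    t * ∑ i ∈ S, y i ≤ ∑ i ∈ S, c i * y i := by
  induction S using Finset.induction_on_max generalizing t with
  | empty => simp
  | insert a s ha ih =>
    have has : a ∉ s := fun h => lt_irrefl a (ha a h)
    have hs : IsLowerSet (s : Set α) := by
      rw [eq_Iio_of_isLowerSet_insert hS ha, coe_Iio]
      exact isLowerSet_Iio a
    have hca : c a * ∑ i ∈ s, y i ≤ ∑ i ∈ s, c i * y i :=
      ih hs fun i hi => hc (ha i hi).le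
    calc t * ∑ i ∈ insert a s, y i ≤ c a * ∑ i ∈ insert a s, y i :=
          mul_le_mul_of_nonneg_right (ht a (mem_insert_self a s)) (hy _ hS)
      _ = c a * y a + c a * ∑ i ∈ s, y i := by rw [sum_insert has, mul_add]
      _ ≤ c a * y a + ∑ i ∈ s, c i * y i := by gcongr
      _ = ∑ i ∈ insert a s, c i * y i := by rw [sum_insert has]

end Greedy

theorem stmt11_general
    (N : ℕ)
    (b : Finset (Fin N) → ℝ) (hb0 : b ∅ = 0)
    (hsuper : ∀ S T : Finset (Fin N), b S + b T ≤ b (S ∪ T) + b (S ∩ T))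
    (Om : Set (Fin N → ℝ))
    (hOm : Om = {x | (∀ S : Finset (Fin N), b S ≤ ∑ i ∈ S, x i) ∧
      ∑ i, x i = b Finset.univ})
    (c : Fin N → ℝ) (hmono : Antitone c)
    (xstar : Fin N → ℝ)
    (hx : ∀ n, xstar n = b (Finset.Iic n) - b (Finset.Iio n)) :
    xstar ∈ Om ∧ ∀ x ∈ Om, ∑ n, c n * xstar n ≤ ∑ n, c n * x n := by
  obtain rfl : xstar = greedyVertex b := funext hx
  subst hOm
  have huniv : IsLowerSet ((univ : Finset (Fin N)) : Set (Fin N)) := by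
    rw [coe_univ]
    exact isLowerSet_univ
  have htotal : ∑ i, greedyVertex b i = b univ := sum_greedyVertex_of_isLowerSet hb0 univ huniv
  refine ⟨⟨le_sum_greedyVertex hb0 hsuper, htotal⟩, fun x ⟨hxS, hxuniv⟩ => ?_⟩
  obtain ⟨t, ht⟩ := (Set.finite_range c).bddBelow
  have hprefix : ∀ S : Finset (Fin N), IsLowerSet (S : Set (Fin N)) →
      0 ≤ ∑ i ∈ S, (x i - greedyVertex b i) := fun S hS => by
    rw [sum_sub_distrib, sum_greedyVertex_of_isLowerSet hb0 S hS]
    exact sub_nonneg.2 (hxS S)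
  have hmain := mul_sum_le_sum_mul_of_antitone hmono hprefix huniv
    fun i _ => ht (Set.mem_range_self i)
  simp only [sum_sub_distrib, mul_sub, htotal, hxuniv, sub_self, mul_zero] at hmain
  linarith

/-- Polymatroid greedy (cμ-rule) theorem: for a supermodular `b` with
`b ∅ = 0` and nonincreasing nonnegative costs `c`, the greedy vertex
`x* n = b(Iic n) - b(Iio n)` lies in the base `Ω` and minimizes the linear
cost `Σ c n x n` over `Ω`. -/
theorem stmt11
    (N : ℕ) (hN : 1 ≤ N)
    (b : Finset (Fin N) → ℝ) (hb0 : b ∅ = 0)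
    (hsuper : ∀ S T : Finset (Fin N), b S + b T ≤ b (S ∪ T) + b (S ∩ T))
    (Om : Set (Fin N → ℝ))
    (hOm : Om = {x | (∀ S : Finset (Fin N), b S ≤ ∑ i ∈ S, x i) ∧
      ∑ i, x i = b Finset.univ})
    (c : Fin N → ℝ) (hc : ∀ n, 0 ≤ c n) (hmono : Antitone c)
    (xstar : Fin N → ℝ)
    (hx : ∀ n, xstar n = b (Finset.Iic n) - b (Finset.Iio n)) :
    xstar ∈ Om ∧ ∀ x ∈ Om, ∑ n, c n * xstar n ≤ ∑ n, c n * x n :=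
  stmt11_general N b hb0 hsuper Om hOm c hmono xstar hx
end
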